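/- arXiv:math/0501079 — 4 statements merged into one kernel-verified Lean document; each statement's English description precedes it below -/
import Mathlib

section
/- Let g:[0,∞)→[0,∞) be continuous with compact support, g(0)=0, g not identically zero, and let ζ>0 be the supremum of the support of g. Fix s₀ ∈ [0,ζ), and for r ≥ 0 let r̄ denote the unique element of [0,ζ) with r − r̄ an integer multiple of ζ. Define g'(s) = g(s₀) + g(“s₀+s”‾) − 2 m_g(s₀, “s₀+s”‾) for s ∈ [0,ζ] and g'(s)=0 for s > ζ. Then g' is continuous with compact support, g'(0)=0, and for every s,t ∈ [0,ζ] one has d_{g'}(s,t) = d_g(“s₀+s”‾, “s₀+t”‾). -/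
/-!
For `h = d_g(p, ·)` and `p` outside the open interval between `b` and `c`, the infimum of `h`
over `[b, c]` is `g p + m_g(b,c) - m_g(p,b) - m_g(p,c)`, so that `d_h(b,c) = d_g(b,c)`: the
infimum is attained where `g`, coming from `b`, first reaches the level
`max (m_g(p,b)) (m_g(b,c))`.
With `p = s₀`, the function `g'` is `h(s₀ + ·)` on `[0, ζ - s₀]` and `h(s₀ + · - ζ)` on
`[ζ - s₀, ζ]`, both monotone reparametrisations, and the two pieces match because `g` vanishes
at `0` and `ζ`. This gives the identity when `s, t` lie in the same piece; when they lie in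
different pieces, `m_{g'}(s,t)` is the smaller of the infima over the two pieces.
-/

open Set Filter NNReal

/-- `m_g(s,t) = inf { g(r) : s ∧ t ≤ r ≤ s ∨ t }`. -/
noncomputable def mg (g : ℝ≥0 → ℝ) (s t : ℝ≥0) : ℝ :=
  sInf (g '' Set.Icc (min s t) (max s t))

/-- `d_g(s,t) = g(s) + g(t) - 2 m_g(s,t)`. -/
noncomputable def dg (g : ℝ≥0 → ℝ) (s t : ℝ≥0) : ℝ :=
  g s + g t - 2 * mg g s t

lemma NNReal.uIcc_eq_image_Icc (p x : ℝ≥0) :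
    uIcc p x = (fun θ : ℝ≥0 => (1 - θ) * p + θ * x) '' Icc 0 1 := by
  rw [← NNReal.segment_eq_uIcc, segment_eq_image₂]
  ext y
  constructor
  · rintro ⟨⟨a, b⟩, ⟨-, -, hab⟩, rfl⟩
    refine ⟨b, ⟨zero_le, hab ▸ le_add_self⟩, ?_⟩
    simp [← hab]
  · rintro ⟨θ, ⟨-, hθ⟩, rfl⟩
    exact ⟨(1 - θ, θ), ⟨zero_le, zero_le, tsub_add_cancel_of_le hθ⟩, rfl⟩

lemma eq_of_coe_eq_add_nat_mul {ζ : ℝ≥0} (hζ : 0 < ζ) {ov : ℝ≥0 → ℝ≥0}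
    (hov : ∀ r : ℝ≥0, ov r < ζ ∧ ∃ k : ℕ, (r : ℝ) = ov r + k * ζ) {r y : ℝ≥0} (hy : y < ζ)
    (k : ℕ) (hk : (r : ℝ) = y + k * ζ) : ov r = y := by
  have hζ' : (0 : ℝ) < ζ := hζ
  have hmod : ∀ {z : ℝ≥0} (n : ℕ), z < ζ → (r : ℝ) = z + n * ζ → toIcoMod hζ' 0 r = z :=
    fun {z} n hz hn => (toIcoMod_eq_iff hζ').2 ⟨⟨z.coe_nonneg, by simpa using hz⟩, n, by simp [hn]⟩
  obtain ⟨hlt, k', hk'⟩ := hov r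
  exact NNReal.coe_injective ((hmod k' hlt hk').symm.trans (hmod k hy hk))

lemma eq_zero_of_sSup_support_le {g : ℝ≥0 → ℝ} (hcont : Continuous g)
    (hbdd : BddAbove (Function.support g)) {x : ℝ≥0} (hx : sSup (Function.support g) ≤ x) :
    g x = 0 := by
  have hIoi : Ioi (sSup (Function.support g)) ⊆ {y | g y = 0} := fun y hy =>
    Function.notMem_support.1 fun hy' => (le_csSup hbdd hy').not_gt hy
  refine closure_minimal hIoi (isClosed_eq hcont continuous_const) ?_
  rwa [closure_Ioi]

section Infimum

variable {g : ℝ≥0 → ℝ}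

lemma mg_eq_sInf_image_uIcc (s t : ℝ≥0) : mg g s t = sInf (g '' uIcc s t) := rfl

lemma mg_comm (s t : ℝ≥0) : mg g s t = mg g t s := by
  rw [mg_eq_sInf_image_uIcc, uIcc_comm, mg_eq_sInf_image_uIcc]

lemma dg_comm (s t : ℝ≥0) : dg g s t = dg g t s := by
  rw [dg, dg, mg_comm]; ring

lemma mg_self (s : ℝ≥0) : mg g s s = g s := by
  simp [mg_eq_sInf_image_uIcc]

lemma dg_self (s : ℝ≥0) : dg g s s = 0 := by
  rw [dg, mg_self]; ring

lemma le_mg {s t : ℝ≥0} {c : ℝ} (h : ∀ x ∈ uIcc s t, c ≤ g x) : c ≤ mg g s t :=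
  le_csInf (nonempty_uIcc.image g) (forall_mem_image.2 h)

lemma mg_eq_of_eqOn_comp {f h : ℝ≥0 → ℝ} {τ : ℝ≥0 → ℝ≥0} (hτ : Continuous τ) (hτ' : Monotone τ)
    {s t : ℝ≥0} (hf : EqOn f (h ∘ τ) (uIcc s t)) : mg f s t = mg h (τ s) (τ t) := by
  rw [mg_eq_sInf_image_uIcc, mg_eq_sInf_image_uIcc, hf.image_eq, image_comp,
    hτ.continuousOn.image_uIcc_of_monotoneOn (hτ'.monotoneOn _)]

lemma dg_eq_of_eqOn_comp {f h : ℝ≥0 → ℝ} {τ : ℝ≥0 → ℝ≥0} (hτ : Continuous τ) (hτ' : Monotone τ)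
    {s t : ℝ≥0} (hf : EqOn f (h ∘ τ) (uIcc s t)) : dg f s t = dg h (τ s) (τ t) := by
  rw [dg, dg, mg_eq_of_eqOn_comp hτ hτ' hf, hf left_mem_uIcc, hf right_mem_uIcc]; rfl

variable (hcont : Continuous g)
include hcont

lemma mg_le {s t x : ℝ≥0} (hx : x ∈ uIcc s t) : mg g s t ≤ g x :=
  csInf_le (isCompact_uIcc.bddBelow_image hcont.continuousOn) (mem_image_of_mem g hx)

lemma exists_mem_uIcc_eq_mg (s t : ℝ≥0) : ∃ x ∈ uIcc s t, g x = mg g s t :=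
  (isCompact_uIcc.image hcont).sInf_mem (nonempty_uIcc.image g)

lemma mg_mono {s t s' t' : ℝ≥0} (h : uIcc s' t' ⊆ uIcc s t) : mg g s t ≤ mg g s' t' :=
  le_mg fun _ hx => mg_le hcont (h hx)

lemma mg_split {a b c : ℝ≥0} (hb : b ∈ uIcc a c) : mg g a c = min (mg g a b) (mg g b c) := by
  refine le_antisymm (le_min (mg_mono hcont (uIcc_subset_uIcc_left hb))
    (mg_mono hcont (uIcc_subset_uIcc_right hb))) (le_mg fun x hx => ?_)
  rcases uIcc_subset_uIcc_union_uIcc hx with hx | hx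
  · exact (min_le_left _ _).trans (mg_le hcont hx)
  · exact (min_le_right _ _).trans (mg_le hcont hx)

lemma mg_eq_zero_of_eq_zero (hnn : ∀ x, 0 ≤ g x) {x y : ℝ≥0} (hy : g y = 0) : mg g x y = 0 :=
  le_antisymm (hy ▸ mg_le hcont right_mem_uIcc) (le_mg fun z _ => hnn z)

lemma dg_eq_of_eq_zero (hnn : ∀ x, 0 ≤ g x) {x y : ℝ≥0} (hy : g y = 0) : dg g x y = g x := by
  rw [dg, mg_eq_zero_of_eq_zero hcont hnn hy, hy]; ring

lemma continuous_mg (p : ℝ≥0) : Continuous (mg g p) := by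
  have hmg : mg g p = fun x => sInf ((fun θ : ℝ≥0 => g ((1 - θ) * p + θ * x)) '' Icc 0 1) := by
    funext x
    rw [← image_image g, ← NNReal.uIcc_eq_image_Icc]; rfl
  rw [hmg]
  exact isCompact_Icc.continuous_sInf (by fun_prop)

lemma continuous_dg (p : ℝ≥0) : Continuous (dg g p) :=
  (continuous_const.add hcont).sub (continuous_const.mul (continuous_mg hcont p))

lemma exists_mem_uIcc_eq_le_mg {b c : ℝ≥0} {L : ℝ} (hcL : mg g b c ≤ L) (hLb : L ≤ g b) :
    ∃ x ∈ uIcc b c, g x = L ∧ L ≤ mg g b x := by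
  obtain ⟨y, hy, hyL⟩ := intermediate_value_uIcc (continuous_mg hcont b).continuousOn
    (show L ∈ uIcc (mg g b b) (mg g b c) from mg_self (g := g) b ▸ mem_uIcc_of_ge hcL hLb)
  obtain ⟨x, hx, hgx⟩ := exists_mem_uIcc_eq_mg hcont b y
  exact ⟨x, uIcc_subset_uIcc_left hy hx, hgx.trans hyL,
    hyL ▸ mg_mono hcont (uIcc_subset_uIcc_left hx)⟩

lemma mg_dg_of_mem_uIcc {p b c : ℝ≥0} (hb : b ∈ uIcc p c) :
    mg (dg g p) b c = g p + mg g b c - mg g p b - mg g p c := by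
  set A := mg g p b
  set B := mg g b c
  have hpc : mg g p c = min A B := mg_split hcont hb
  have hpx : ∀ x ∈ uIcc b c, mg g p x = min A (mg g b x) := fun x hx =>
    mg_split hcont (by simp only [mem_uIcc] at hb hx ⊢; grind)
  rw [hpc]
  apply le_antisymm
  · obtain ⟨x, hx, hgx, hLx⟩ := exists_mem_uIcc_eq_le_mg hcont (le_max_right A B)
      (max_le (mg_le hcont right_mem_uIcc) (mg_le hcont left_mem_uIcc))
    calc mg (dg g p) b c ≤ dg g p x := mg_le (continuous_dg hcont p) hx
      _ = g p + max A B - 2 * A := by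
        rw [dg, hpx x hx, min_eq_left ((le_max_left A B).trans hLx), hgx]
      _ = g p + B - A - min A B := by linarith [min_add_max A B]
  · refine le_mg fun x hx => ?_
    have hBx : B ≤ mg g b x := mg_mono hcont (uIcc_subset_uIcc_left hx)
    have hxg : mg g b x ≤ g x := mg_le hcont right_mem_uIcc
    rw [dg, hpx x hx]
    rcases min_cases A B with ⟨h1, _⟩ | ⟨h1, _⟩ <;>
      rcases min_cases A (mg g b x) with ⟨h2, _⟩ | ⟨h2, _⟩ <;> linarith

lemma dg_dg_of_mem_uIcc {p b c : ℝ≥0} (hb : b ∈ uIcc p c) : dg (dg g p) b c = dg g b c := by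
  rw [dg, mg_dg_of_mem_uIcc hcont hb, dg, dg, dg]; ring

end Infimum

section Reroot

variable {g : ℝ≥0 → ℝ} (hcont : Continuous g) {ζ s₀ : ℝ≥0} {f : ℝ≥0 → ℝ}
  (hlow : ∀ r ≤ ζ - s₀, f r = dg g s₀ (s₀ + r))
  (hhigh : ∀ r, ζ - s₀ ≤ r → r ≤ ζ → f r = dg g s₀ (s₀ + r - ζ))

lemma continuous_add_tsub (ζ s₀ : ℝ≥0) : Continuous fun r : ℝ≥0 => s₀ + r - ζ := by fun_prop

lemma monotone_add_tsub (ζ s₀ : ℝ≥0) : Monotone fun r : ℝ≥0 => s₀ + r - ζ :=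
  fun _ _ h => tsub_le_tsub_right (add_le_add_right h s₀) ζ

include hcont

lemma dg_add_tsub_self_eq (hnn : ∀ x, 0 ≤ g x) (h0 : g 0 = 0) (hgζ : g ζ = 0) (hs₀ : s₀ ≤ ζ) :
    dg g s₀ (s₀ + (ζ - s₀) - ζ) = dg g s₀ (s₀ + (ζ - s₀)) := by
  rw [add_tsub_cancel_of_le hs₀, tsub_self, dg_eq_of_eq_zero hcont hnn h0,
    dg_eq_of_eq_zero hcont hnn hgζ]

include hlow hhigh in
lemma continuous_of_eq_dg (hnn : ∀ x, 0 ≤ g x) (h0 : g 0 = 0) (hgζ : g ζ = 0) (hs₀ : s₀ ≤ ζ)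
    (hzero : ∀ r, ζ < r → f r = 0) : Continuous f := by
  have hf : f = fun r => if r ≤ ζ - s₀ then dg g s₀ (s₀ + r)
      else if r ≤ ζ then dg g s₀ (s₀ + r - ζ) else 0 := by
    funext r
    split_ifs with h1 h2
    · exact hlow r h1
    · exact hhigh r (le_of_not_ge h1) h2
    · exact hzero r (lt_of_not_ge h2)
  have hh := continuous_dg hcont s₀
  rw [hf]
  refine Continuous.if_le (by fun_prop) (Continuous.if_le
    (hh.comp (continuous_add_tsub ζ s₀)) continuous_const continuous_id continuous_const ?_)
    continuous_id continuous_const fun r hr => ?_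
  · rintro r rfl
    rw [add_tsub_cancel_right, dg_self]
  · rw [hr, if_pos tsub_le_self, dg_add_tsub_self_eq hcont hnn h0 hgζ hs₀]

include hlow in
lemma dg_of_le_tsub {s t : ℝ≥0} (hst : s ≤ t) (ht : t ≤ ζ - s₀) :
    dg f s t = dg g (s₀ + s) (s₀ + t) := by
  have hf : EqOn f (dg g s₀ ∘ (s₀ + ·)) (uIcc s t) := fun r hr =>
    hlow r (((uIcc_of_le hst ▸ hr).2).trans ht)
  rw [dg_eq_of_eqOn_comp (by fun_prop) (fun _ _ h => add_le_add_right h s₀) hf,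
    dg_dg_of_mem_uIcc hcont (mem_uIcc_of_le le_self_add (add_le_add_right hst s₀))]

include hhigh in
lemma dg_of_tsub_le {s t : ℝ≥0} (hs : ζ - s₀ ≤ s) (hst : s ≤ t) (ht : t ≤ ζ) :
    dg f s t = dg g (s₀ + s - ζ) (s₀ + t - ζ) := by
  have hf : EqOn f (dg g s₀ ∘ fun r => s₀ + r - ζ) (uIcc s t) := fun r hr =>
    have hr' := uIcc_of_le hst ▸ hr
    hhigh r (hs.trans hr'.1) (hr'.2.trans ht)
  have hts : s₀ + t - ζ ≤ s₀ := tsub_le_iff_right.2 (add_le_add_right ht s₀)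
  rw [dg_eq_of_eqOn_comp (continuous_add_tsub ζ s₀) (monotone_add_tsub ζ s₀) hf, dg_comm,
    dg_dg_of_mem_uIcc hcont (mem_uIcc_of_ge (monotone_add_tsub ζ s₀ hst) hts), dg_comm]

include hlow hhigh in
lemma dg_of_le_tsub_le (hnn : ∀ x, 0 ≤ g x) (h0 : g 0 = 0) (hgζ : g ζ = 0) (hs₀ : s₀ ≤ ζ)
    (hf : Continuous f) {s t : ℝ≥0} (hs : s ≤ ζ - s₀) (ht₁ : ζ - s₀ ≤ t) (ht₂ : t ≤ ζ) :
    dg f s t = dg g (s₀ + s) (s₀ + t - ζ) := by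
  have hζ : s₀ + (ζ - s₀) = ζ := add_tsub_cancel_of_le hs₀
  have hts : s₀ + t - ζ ≤ s₀ := tsub_le_iff_right.2 (add_le_add_right ht₂ s₀)
  have hleft : mg f s (ζ - s₀) = g s₀ - mg g s₀ (s₀ + s) := by
    have hfl : EqOn f (dg g s₀ ∘ (s₀ + ·)) (uIcc s (ζ - s₀)) := fun r hr =>
      hlow r ((uIcc_of_le hs ▸ hr).2)
    rw [mg_eq_of_eqOn_comp (by fun_prop) (fun _ _ h => add_le_add_right h s₀) hfl, hζ,
      mg_dg_of_mem_uIcc hcont (mem_uIcc_of_le le_self_add (hζ ▸ add_le_add_right hs s₀)),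
      mg_eq_zero_of_eq_zero hcont hnn hgζ, mg_eq_zero_of_eq_zero hcont hnn hgζ]
    ring
  have hright : mg f (ζ - s₀) t = g s₀ - mg g s₀ (s₀ + t - ζ) := by
    have hfr : EqOn f (dg g s₀ ∘ fun r => s₀ + r - ζ) (uIcc (ζ - s₀) t) := fun r hr =>
      have hr' := uIcc_of_le ht₁ ▸ hr
      hhigh r hr'.1 (hr'.2.trans ht₂)
    rw [mg_eq_of_eqOn_comp (continuous_add_tsub ζ s₀) (monotone_add_tsub ζ s₀) hfr, hζ,
      tsub_self, mg_comm, mg_dg_of_mem_uIcc hcont (mem_uIcc_of_ge zero_le hts),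
      mg_eq_zero_of_eq_zero hcont hnn h0, mg_eq_zero_of_eq_zero hcont hnn h0]
    ring
  have hsplit : mg g (s₀ + s) (s₀ + t - ζ) = min (mg g s₀ (s₀ + s)) (mg g s₀ (s₀ + t - ζ)) := by
    rw [mg_comm, mg_split hcont (mem_uIcc_of_le hts le_self_add), min_comm, mg_comm _ s₀]
  rw [dg, mg_split hf (mem_uIcc_of_le hs ht₁), hleft, hright, min_sub_sub_left,
    hlow s hs, hhigh t ht₁ ht₂, dg, dg, dg, hsplit]
  linarith [min_add_max (mg g s₀ (s₀ + s)) (mg g s₀ (s₀ + t - ζ))]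

include hlow hhigh in
lemma dg_eq_dg_of_le (hnn : ∀ x, 0 ≤ g x) (h0 : g 0 = 0) (hgζ : g ζ = 0) (hs₀ : s₀ ≤ ζ)
    (hf : Continuous f) {σ : ℝ≥0 → ℝ≥0} (hσlow : ∀ r < ζ - s₀, σ r = s₀ + r)
    (hσhigh : ∀ r, ζ - s₀ ≤ r → r ≤ ζ → σ r = s₀ + r - ζ) {s t : ℝ≥0} (hs : s ≤ ζ)
    (ht : t ≤ ζ) : dg f s t = dg g (σ s) (σ t) := by
  wlog hst : s ≤ t generalizing s t
  · rw [dg_comm, dg_comm (g := g)]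
    exact this ht hs (le_of_not_ge hst)
  rcases lt_or_ge t (ζ - s₀) with htu | hut
  · rw [hσlow s (hst.trans_lt htu), hσlow t htu]
    exact dg_of_le_tsub hcont hlow hst htu.le
  rcases lt_or_ge s (ζ - s₀) with hsu | hus
  · rw [hσlow s hsu, hσhigh t hut ht]
    exact dg_of_le_tsub_le hcont hlow hhigh hnn h0 hgζ hs₀ hf hsu.le hut ht
  · rw [hσhigh s hus hs, hσhigh t hut ht]
    exact dg_of_tsub_le hcont hhigh hus hst ht

end Reroot

theorem stmt3_general (g : ℝ≥0 → ℝ) (hcont : Continuous g) (hnn : ∀ x, 0 ≤ g x)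
    (hsupp : HasCompactSupport g) (h0 : g 0 = 0)
    (ζ : ℝ≥0) (hζ : ζ = sSup (Function.support g)) (hpos : 0 < ζ)
    (s₀ : ℝ≥0) (hs₀ : s₀ < ζ)
    (ov : ℝ≥0 → ℝ≥0)
    (hov : ∀ r : ℝ≥0, ov r < ζ ∧ ∃ k : ℕ, (r : ℝ) = (ov r : ℝ) + k * (ζ : ℝ))
    (g' : ℝ≥0 → ℝ)
    (hg'₁ : ∀ s : ℝ≥0, s ≤ ζ →
      g' s = g s₀ + g (ov (s₀ + s)) - 2 * mg g s₀ (ov (s₀ + s)))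
    (hg'₂ : ∀ s : ℝ≥0, ζ < s → g' s = 0) :
    Continuous g' ∧ HasCompactSupport g' ∧ g' 0 = 0 ∧
    ∀ s t : ℝ≥0, s ≤ ζ → t ≤ ζ →
      dg g' s t = dg g (ov (s₀ + s)) (ov (s₀ + t)) := by
  have hgζ : g ζ = 0 :=
    eq_zero_of_sSup_support_le hcont (hsupp.isCompact.bddAbove.mono (subset_tsupport g)) hζ.ge
  have hov_low : ∀ r < ζ - s₀, ov (s₀ + r) = s₀ + r := fun r hr =>
    eq_of_coe_eq_add_nat_mul hpos hov (lt_tsub_iff_left.1 hr) 0 (by simp)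
  have hov_high : ∀ r, ζ - s₀ ≤ r → r ≤ ζ → ov (s₀ + r) = s₀ + r - ζ := fun r h1 h2 =>
    eq_of_coe_eq_add_nat_mul hpos hov
      (tsub_lt_iff_left (tsub_le_iff_left.1 h1) |>.2 (add_lt_add_of_lt_of_le hs₀ h2)) 1
      (by rw [NNReal.coe_sub (tsub_le_iff_left.1 h1)]; push_cast; ring)
  have hhigh : ∀ r, ζ - s₀ ≤ r → r ≤ ζ → g' r = dg g s₀ (s₀ + r - ζ) := fun r h1 h2 =>
    (hg'₁ r h2).trans (by rw [hov_high r h1 h2]; rfl)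
  have hlow : ∀ r ≤ ζ - s₀, g' r = dg g s₀ (s₀ + r) := by
    intro r hr
    rcases hr.lt_or_eq with hr | rfl
    · exact (hg'₁ r (hr.le.trans tsub_le_self)).trans (by rw [hov_low r hr]; rfl)
    · rw [hhigh _ le_rfl tsub_le_self, dg_add_tsub_self_eq hcont hnn h0 hgζ hs₀.le]
  have hcont' := continuous_of_eq_dg hcont hlow hhigh hnn h0 hgζ hs₀.le hg'₂
  refine ⟨hcont', HasCompactSupport.intro (isCompact_Icc (a := 0) (b := ζ))
    fun r hr => hg'₂ r (lt_of_not_ge fun h => hr ⟨zero_le, h⟩),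
    by rw [hlow 0 zero_le, add_zero, dg_self], fun s t hs ht =>
    dg_eq_dg_of_le hcont hlow hhigh hnn h0 hgζ hs₀.le hcont' (σ := fun r => ov (s₀ + r))
      hov_low hov_high hs ht⟩

/-- **Statement 3** (root-changing, Lemma 2.2, first part): with `ζ > 0` the supremum
of the support of `g`, `s₀ ∈ [0,ζ)`, `r̄` the representative of `r` modulo `ζ` in
`[0,ζ)`, and `g'(s) = g(s₀) + g(ov(s₀+s)) - 2 m_g(s₀, ov(s₀+s))` for `s ∈ [0,ζ]`,
`g'(s) = 0` for `s > ζ`: the function `g'` is continuous with compact support,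
`g'(0) = 0`, and `d_{g'}(s,t) = d_g(ov(s₀+s), ov(s₀+t))` for `s, t ∈ [0,ζ]`. -/
theorem stmt3 (g : ℝ≥0 → ℝ) (hcont : Continuous g) (hnn : ∀ x, 0 ≤ g x)
    (hsupp : HasCompactSupport g) (h0 : g 0 = 0) (hne : g ≠ 0)
    (ζ : ℝ≥0) (hζ : ζ = sSup (Function.support g)) (hpos : 0 < ζ)
    (s₀ : ℝ≥0) (hs₀ : s₀ < ζ)
    (ov : ℝ≥0 → ℝ≥0)
    (hov : ∀ r : ℝ≥0, ov r < ζ ∧ ∃ k : ℕ, (r : ℝ) = (ov r : ℝ) + k * (ζ : ℝ))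
    (g' : ℝ≥0 → ℝ)
    (hg'₁ : ∀ s : ℝ≥0, s ≤ ζ →
      g' s = g s₀ + g (ov (s₀ + s)) - 2 * mg g s₀ (ov (s₀ + s)))
    (hg'₂ : ∀ s : ℝ≥0, ζ < s → g' s = 0) :
    Continuous g' ∧ HasCompactSupport g' ∧ g' 0 = 0 ∧
    ∀ s t : ℝ≥0, s ≤ ζ → t ≤ ζ →
      dg g' s t = dg g (ov (s₀ + s)) (ov (s₀ + t)) :=
  stmt3_general g hcont hnn hsupp h0 ζ hζ hpos s₀ hs₀ ov hov g' hg'₁ hg'₂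
end

section
/- Let g,g':[0,∞)→[0,∞) be continuous with compact support and g(0)=g'(0)=0. Then for every s,t ≥ 0, |d_g(s,t) − d_{g'}(s,t)| ≤ 4‖g−g'‖, where ‖g−g'‖ = sup_{r≥0} |g(r)−g'(r)| is the uniform norm. -/
open Set Filter NNReal

lemma mg_le_aux (g g' : ℝ≥0 → ℝ) (hnn : ∀ x, 0 ≤ g x) (C : ℝ)
    (hC : ∀ r, g r ≤ g' r + C) (s t : ℝ≥0) :
    mg g s t ≤ mg g' s t + C := by
  have hne : (Set.Icc (min s t) (max s t)).Nonempty := ⟨min s t, le_refl _, min_le_max⟩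
  have hbdd : BddBelow (g '' Set.Icc (min s t) (max s t)) :=
    ⟨0, by rintro x ⟨r, _, rfl⟩; exact hnn r⟩
  have h : mg g s t - C ≤ mg g' s t := by
    apply le_csInf (hne.image _)
    rintro x ⟨r, hr, rfl⟩
    have h1 : mg g s t ≤ g r := csInf_le hbdd ⟨r, hr, rfl⟩
    linarith [hC r]
  linarith

/-- key estimate in Lemma 2.3: for coding functions `g, g'`,
`|d_g(s,t) - d_{g'}(s,t)| ≤ 4 ‖g - g'‖` where `‖g - g'‖ = sup_{r ≥ 0} |g(r) - g'(r)|`. -/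
theorem stmt5 (g g' : ℝ≥0 → ℝ)
    (hg : Continuous g) (hg' : Continuous g')
    (hgs : HasCompactSupport g) (hg's : HasCompactSupport g')
    (hnn : ∀ x, 0 ≤ g x) (hnn' : ∀ x, 0 ≤ g' x)
    (h0 : g 0 = 0) (h0' : g' 0 = 0) :
    ∀ s t : ℝ≥0,
      |dg g s t - dg g' s t| ≤ 4 * sSup (Set.range fun r => |g r - g' r|) := by
  intro s t
  set C := sSup (Set.range fun r => |g r - g' r|) with hCdef
  have hcs : HasCompactSupport (fun r => |g r - g' r|) := HasCompactSupport.abs (f := fun r => g r - g' r) (hgs.comp₂_left hg's (sub_zero 0))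
  have hcont : Continuous (fun r : ℝ≥0 => |g r - g' r|) := (hg.sub hg').abs
  have hbdd : BddAbove (Set.range fun r => |g r - g' r|) :=
    hcont.bddAbove_range_of_hasCompactSupport hcs
  have hC : ∀ r, |g r - g' r| ≤ C := fun r => le_csSup hbdd ⟨r, rfl⟩
  have h1 : ∀ r, g r ≤ g' r + C := fun r => by
    have := abs_le.mp (hC r); linarith [this.2]
  have h2 : ∀ r, g' r ≤ g r + C := fun r => by
    have := abs_le.mp (hC r); linarith [this.1]
  have hm1 := mg_le_aux g g' hnn C h1 s t
  have hm2 := mg_le_aux g' g hnn' C h2 s t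
  have hs := abs_le.mp (hC s)
  have ht := abs_le.mp (hC t)
  rw [abs_le]
  constructor <;> simp only [dg] <;> nlinarith [hs.1, hs.2, ht.1, ht.2]
end

section
/- Let ψ be a branching mechanism with ∫_1^∞ du/ψ(u) < ∞, and suppose its lower index γ satisfies γ > 1. Then limsup_{δ→0+} log v(δ) / log(1/δ) ≤ 1/(γ−1). -/
open Set Filter MeasureTheory

/-- A (critical or subcritical) branching mechanism
`ψ(λ) = α λ + β λ² + ∫_{(0,∞)} (e^{-λr} - 1 + λ r) π(dr)`, where `α, β ≥ 0` and `π`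
is a σ-finite measure on `(0,∞)` with `∫ (r ∧ r²) π(dr) < ∞`. -/
structure BranchingMechanism : Type where
  α : ℝ
  β : ℝ
  pi : Measure ℝ
  alpha_nonneg : 0 ≤ α
  beta_nonneg : 0 ≤ β
  sigmaFinite : SigmaFinite pi
  supported : pi (Set.Iic 0) = 0
  finite_int : (∫⁻ r in Set.Ioi (0 : ℝ), ENNReal.ofReal (min r (r ^ 2)) ∂pi) < ⊤

/-- The function `ψ` associated with a branching mechanism. -/
noncomputable def BranchingMechanism.psi (b : BranchingMechanism) (l : ℝ) : ℝ :=
  b.α * l + b.β * l ^ 2 +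
    ∫ r in Set.Ioi (0 : ℝ), (Real.exp (-l * r) - 1 + l * r) ∂b.pi

/-- The lower index `γ = sup{a ≥ 0 : λ^{-a} ψ(λ) → ∞ as λ → ∞}` of `ψ` at infinity. -/
noncomputable def lowerIndex (ψ : ℝ → ℝ) : ℝ :=
  sSup {a : ℝ | 0 ≤ a ∧ Tendsto (fun l : ℝ => l ^ (-a) * ψ l) atTop atTop}

/-- The upper index `η = inf{a ≥ 0 : λ^{-a} ψ(λ) → 0 as λ → ∞}` of `ψ` at infinity. -/
noncomputable def upperIndex (ψ : ℝ → ℝ) : ℝ :=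
  sInf {a : ℝ | 0 ≤ a ∧ Tendsto (fun l : ℝ => l ^ (-a) * ψ l) atTop (nhds 0)}

/-- **Statement 12** (Lemma 5.4 (i)): if `∫_1^∞ du/ψ(u) < ∞` and the lower index `γ`
satisfies `γ > 1`, then `limsup_{δ→0+} log v(δ) / log(1/δ) ≤ 1/(γ-1)`, where `v` is
determined by `∫_{v(a)}^∞ du/ψ(u) = a`. -/
theorem stmt12 (b : BranchingMechanism)
    (hint : (∫⁻ u in Set.Ioi (1 : ℝ), (ENNReal.ofReal (b.psi u))⁻¹) < ⊤)
    (v : ℝ → ℝ)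
    (hv : ∀ a : ℝ, 0 < a → 0 < v a ∧ (∫ u in Set.Ioi (v a), 1 / b.psi u) = a)
    (hγ : 1 < lowerIndex b.psi) :
    ∀ ε > (0 : ℝ), ∀ᶠ δ in nhdsWithin (0 : ℝ) (Set.Ioi 0),
      Real.log (v δ) / Real.log (1 / δ) ≤ 1 / (lowerIndex b.psi - 1) + ε := by
  intro ε hε
  set γ := lowerIndex b.psi with hγdef
  set ψ := b.psi with hψdef
  set R : ℝ := 1 / (γ - 1) + ε with hRdef
  have hγ1 : 0 < γ - 1 := by linarith
  have hR0 : 0 < R := by positivity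
  -- pick a in the defining set with 1 + R⁻¹ < a
  have hSne : {a : ℝ | 0 ≤ a ∧ Tendsto (fun l : ℝ => l ^ (-a) * ψ l) atTop atTop}.Nonempty := by
    by_contra h
    rw [Set.not_nonempty_iff_eq_empty] at h
    have h0 : lowerIndex ψ = 0 := by rw [lowerIndex, h, Real.sSup_empty]
    have h1 := hγ
    rw [hγdef, h0] at h1
    linarith
  have ht : 1 + R⁻¹ < γ := by
    have h1 : (γ - 1)⁻¹ < R := by rw [hRdef, one_div]; linarith
    have h2 : R⁻¹ < γ - 1 := by
      have := inv_strictAnti₀ (by positivity : (0:ℝ) < (γ-1)⁻¹) h1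
      rwa [inv_inv] at this
    linarith
  obtain ⟨a, ⟨-, haT⟩, hat⟩ := exists_lt_of_lt_csSup hSne ht
  have hRi : 0 < R⁻¹ := by positivity
  have ha1 : 1 < a := by linarith
  have haR : 1 < R * (a - 1) := by
    have : R⁻¹ < a - 1 := by linarith
    calc (1:ℝ) = R * R⁻¹ := by rw [mul_inv_cancel₀ hR0.ne']
    _ < R * (a-1) := by apply mul_lt_mul_of_pos_left this hR0
  set s : ℝ := R * (a - 1) - 1 with hsdef
  have hs0 : 0 < s := by linarith
  -- find M with ψ l ≥ l ^ a for l ≥ M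
  obtain ⟨M0, hM0⟩ := Filter.eventually_atTop.mp (haT.eventually_ge_atTop 1)
  set M : ℝ := max M0 1 with hMdef
  have hM1 : (1:ℝ) ≤ M := le_max_right _ _
  have hψge : ∀ l : ℝ, M ≤ l → l ^ a ≤ ψ l := by
    intro l hl
    have hl1 : (1:ℝ) ≤ l := le_trans hM1 hl
    have hl0 : (0:ℝ) < l := by linarith
    have h := hM0 l (le_trans (le_max_left _ _) hl)
    have hpos : (0:ℝ) < l ^ a := Real.rpow_pos_of_pos hl0 a
    have := mul_le_mul_of_nonneg_left h hpos.le
    rwa [mul_one, ← mul_assoc, ← Real.rpow_add hl0, add_neg_cancel, Real.rpow_zero,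
      one_mul] at this
  -- the eventual threshold
  set K : ℝ := max 1 (max (Real.log M / R) (-Real.log (a-1) / s)) with hKdef
  filter_upwards [Ioo_mem_nhdsGT_of_mem
    (show (0:ℝ) ∈ Set.Ico 0 (Real.exp (-K)) from ⟨le_refl _, Real.exp_pos _⟩)] with δ hδ
  obtain ⟨hδ0, hδe⟩ := hδ
  have hlogδ : Real.log δ < -K := by
    have := Real.log_lt_log hδ0 hδe
    rwa [Real.log_exp] at this
  set L : ℝ := Real.log (1/δ) with hLdef
  have hLK : K < L := by
    rw [hLdef, one_div, Real.log_inv]; linarith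
  have hL0 : 0 < L := lt_trans (lt_of_lt_of_le zero_lt_one (le_max_left _ _)) hLK
  obtain ⟨hvpos, hvint⟩ := hv δ hδ0
  rw [div_le_iff₀ hL0]
  by_cases hcase : v δ < M
  · -- small case : log v δ ≤ log M ≤ R * K ≤ R * L
    have h1 : Real.log (v δ) ≤ Real.log M := Real.log_le_log hvpos hcase.le
    have h2 : Real.log M / R ≤ K := le_trans (le_max_left _ _) (le_max_right _ _)
    have h3 : Real.log M ≤ R * K := by
      rw [div_le_iff₀ hR0] at h2; linarith [h2]
    calc Real.log (v δ) ≤ R * K := le_trans h1 h3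
    _ ≤ R * L := by nlinarith
  · push_neg at hcase
    have hv0 : 0 < v δ := hvpos
    -- integrability of 1/ψ on Ioi (v δ)
    have hInt : MeasureTheory.IntegrableOn (fun u => 1 / ψ u) (Set.Ioi (v δ)) := by
      by_contra h
      rw [MeasureTheory.integral_undef h] at hvint
      linarith
    have hIntR : MeasureTheory.IntegrableOn (fun u : ℝ => u ^ (-a)) (Set.Ioi (v δ)) :=
      integrableOn_Ioi_rpow_of_lt (by linarith) (by linarith)
    have hmono : (∫ u in Set.Ioi (v δ), 1 / ψ u) ≤ ∫ u in Set.Ioi (v δ), u ^ (-a) := by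
      apply MeasureTheory.setIntegral_mono_on hInt hIntR measurableSet_Ioi
      intro u hu
      have hu0 : (0:ℝ) < u := lt_of_lt_of_le (by linarith [hu.out, hcase, hM1]) (le_refl u)
      have huM : M ≤ u := le_trans hcase hu.out.le
      have hua : (0:ℝ) < u ^ a := Real.rpow_pos_of_pos hu0 a
      have := one_div_le_one_div_of_le hua (hψge u huM)
      rwa [one_div (u ^ a), ← Real.rpow_neg hu0.le] at this
    have hval : (∫ u in Set.Ioi (v δ), u ^ (-a)) = (v δ) ^ (1 - a) / (a - 1) := by
      rw [integral_Ioi_rpow_of_lt (by linarith) hv0]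
      rw [show -a + 1 = 1 - a by ring]
      rw [div_eq_div_iff (by linarith : (1:ℝ) - a ≠ 0) (by linarith : a - 1 ≠ 0)]
      ring
    have hkey : δ ≤ (v δ) ^ (1 - a) / (a - 1) := by
      have h := hmono.trans_eq hval
      rwa [hvint] at h
    -- take logs
    have hrp : (0:ℝ) < (v δ) ^ (1 - a) / (a - 1) := lt_of_lt_of_le hδ0 hkey
    have hlog : Real.log δ ≤ (1 - a) * Real.log (v δ) - Real.log (a - 1) := by
      have := Real.log_le_log hδ0 hkey
      rwa [Real.log_div (by positivity : ((v δ) ^ (1-a) : ℝ) ≠ 0) (by linarith : a - 1 ≠ 0),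
        Real.log_rpow hv0] at this
    have hL : L = -Real.log δ := by rw [hLdef, one_div, Real.log_inv]
    have h1 : (a - 1) * Real.log (v δ) ≤ L - Real.log (a - 1) := by
      rw [hL]; nlinarith [hlog]
    have h2 : -Real.log (a - 1) ≤ s * L := by
      have hK2 : -Real.log (a-1) / s ≤ K := le_trans (le_max_right _ _) (le_max_right _ _)
      rw [div_le_iff₀ hs0] at hK2
      nlinarith
    have hsl : s * L = (a - 1) * (R * L) - L := by rw [hsdef]; ring
    have h3 : (a - 1) * Real.log (v δ) ≤ (a - 1) * (R * L) := by linarith [h1, h2, hsl]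
    exact le_of_mul_le_mul_left h3 (by linarith : (0:ℝ) < a - 1)
end

section
/- Let ψ be a branching mechanism with ∫_1^∞ du/ψ(u) < ∞, and suppose its lower index γ satisfies γ > 1. Then liminf_{δ→0+} log v(δ) / log(1/δ) ≤ 1/(η−1), where η is the upper index of ψ at infinity. -/
/-!
Since `γ > 1`, there is `a₀ > 1` with `ψ(u) ≥ u^a₀` for all large `u`; this forces `η ≥ a₀ > 1`.
Put `c = 1/(η-1) + ε` and pick `1 + 1/c < a < η`. Then `ψ(λ) ≥ c₀ λ^a` for arbitrarily large `λ`.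
As `ψ(u)/u` is nondecreasing, for such `λ` and `u ≥ λ` also `ψ(u) ≥ c₀ λ^(a-1) u`, and a weighted
geometric mean of this bound with `u^a₀` is a power `u^p`, `p > 1`, whose integral gives
`∫_λ^∞ du/ψ(u) ≤ λ^(-1/c)`. As `∫_{v(δ)}^∞ du/ψ(u) = δ` with a positive integrand,
`δ = λ^(-1/c)` satisfies `v(δ) ≤ λ`, i.e. `log v(δ) ≤ c log(1/δ)`, along a sequence `δ → 0+`.
-/

open Set Filter MeasureTheory

open Topology

noncomputable def compensatedExp (x : ℝ) : ℝ := Real.exp (-x) - 1 + x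

lemma convexOn_compensatedExp : ConvexOn ℝ univ compensatedExp :=
  ⟨convex_univ, fun x _ y _ a b ha hb hab => by
    have h := convexOn_exp.2 (mem_univ (-x)) (mem_univ (-y)) ha hb hab
    simp only [smul_eq_mul, compensatedExp] at h ⊢
    rw [show -(a * x + b * y) = a * -x + b * -y by ring]
    linear_combination h + hab⟩

lemma compensatedExp_zero : compensatedExp 0 = 0 := by simp [compensatedExp]

lemma compensatedExp_nonneg (x : ℝ) : 0 ≤ compensatedExp x := by
  have := Real.add_one_le_exp (-x)
  unfold compensatedExp
  linarith

lemma compensatedExp_le_min {x : ℝ} (hx : 0 ≤ x) : compensatedExp x ≤ min x (x ^ 2) := by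
  have hexp : Real.exp (-x) ≤ 1 := Real.exp_le_one_iff.mpr (neg_nonpos.mpr hx)
  unfold compensatedExp
  refine le_min (by linarith) ?_
  rcases le_or_gt x 1 with hx1 | hx1
  · have h := abs_le.mp
      (Real.abs_exp_sub_one_sub_id_le (x := -x) (by rwa [abs_neg, abs_of_nonneg hx]))
    rw [neg_sq] at h
    linarith [h.2]
  · nlinarith

lemma compensatedExp_mul_le {l r : ℝ} (hl : 0 ≤ l) (hr : 0 ≤ r) :
    compensatedExp (l * r) ≤ max l (l ^ 2) * min r (r ^ 2) := by
  refine (compensatedExp_le_min (mul_nonneg hl hr)).trans ?_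
  rcases min_cases r (r ^ 2) with ⟨h, -⟩ | ⟨h, -⟩ <;> rw [h]
  · exact (min_le_left _ _).trans (mul_le_mul_of_nonneg_right (le_max_left _ _) hr)
  · calc min (l * r) ((l * r) ^ 2) ≤ l ^ 2 * r ^ 2 := (min_le_right _ _).trans_eq (mul_pow l r 2)
      _ ≤ max l (l ^ 2) * r ^ 2 := mul_le_mul_of_nonneg_right (le_max_right _ _) (sq_nonneg r)

lemma mul_compensatedExp_le_mul {x y : ℝ} (hx : 0 < x) (hxy : x ≤ y) :
    y * compensatedExp x ≤ x * compensatedExp y := by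
  have h := convexOn_compensatedExp.secant_mono (mem_univ 0) (mem_univ x) (mem_univ y)
    hx.ne' (hx.trans_le hxy).ne' hxy
  simp only [compensatedExp_zero, sub_zero] at h
  rw [div_le_div_iff₀ hx (hx.trans_le hxy)] at h
  linarith

lemma rpow_mul_rpow_le_of_le {A B z θ : ℝ} (hA : 0 ≤ A) (hB : 0 ≤ B) (hθ0 : 0 ≤ θ)
    (hθ1 : θ ≤ 1) (hAz : A ≤ z) (hBz : B ≤ z) : A ^ (1 - θ) * B ^ θ ≤ z := by
  refine (Real.geom_mean_le_arith_mean2_weighted (sub_nonneg.mpr hθ1) hθ0 hA hB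
    (sub_add_cancel 1 θ)).trans ?_
  nlinarith

lemma exists_lt_mul_one_sub_add_mul {s u w : ℝ} (h : s < u) :
    ∃ θ, 0 < θ ∧ θ < 1 ∧ s < u * (1 - θ) + θ * w := by
  have hcont : Tendsto (fun θ : ℝ => u * (1 - θ) + θ * w) (𝓝[>] 0) (𝓝 u) := by
    have : Continuous fun θ : ℝ => u * (1 - θ) + θ * w := by fun_prop
    simpa using (this.tendsto 0).mono_left nhdsWithin_le_nhds
  obtain ⟨θ, hθs, hθ⟩ := ((hcont.eventually (lt_mem_nhds h)).and (Ioo_mem_nhdsGT one_pos)).exists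
  exact ⟨θ, hθ.1, hθ.2, hθs⟩

section Indices

variable {ψ : ℝ → ℝ}

lemma exists_eventually_rpow_le_of_lt_lowerIndex {c : ℝ} (hc : 0 ≤ c) (h : c < lowerIndex ψ) :
    ∃ a, c < a ∧ ∀ᶠ l in atTop, l ^ a ≤ ψ l := by
  by_contra hcon
  refine h.not_ge (Real.sSup_le (fun a ⟨_, ha⟩ => ?_) hc)
  by_contra! hca
  refine hcon ⟨a, hca, ?_⟩
  filter_upwards [ha.eventually_ge_atTop 1, eventually_gt_atTop 0] with l hl hl0
  rwa [Real.rpow_neg hl0.le, ← div_eq_inv_mul, one_le_div (by positivity)] at hl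

lemma le_upperIndex_of_eventually_rpow_le
    (hne : ∃ a : ℝ, 0 ≤ a ∧ Tendsto (fun l : ℝ => l ^ (-a) * ψ l) atTop (𝓝 0)) {a : ℝ}
    (h : ∀ᶠ l in atTop, l ^ a ≤ ψ l) : a ≤ upperIndex ψ := by
  refine le_csInf hne fun a' ⟨_, ha'⟩ => ?_
  by_contra! ha'a
  refine not_tendsto_atTop_of_tendsto_nhds ha' (tendsto_atTop_mono' atTop ?_
    (tendsto_rpow_atTop (sub_pos.mpr ha'a)))
  filter_upwards [h, eventually_gt_atTop 0] with l hl hl0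
  calc l ^ (a - a') = l ^ (-a') * l ^ a := by rw [← Real.rpow_add hl0]; ring_nf
    _ ≤ l ^ (-a') * ψ l := mul_le_mul_of_nonneg_left hl (Real.rpow_nonneg hl0.le _)

lemma frequently_le_of_lt_upperIndex {a : ℝ} (ha : 0 ≤ a) (h : a < upperIndex ψ)
    (hψ : ∀ᶠ l in atTop, 0 ≤ ψ l) : ∃ c > 0, ∃ᶠ l in atTop, c * l ^ a ≤ ψ l := by
  have hnot : ¬ Tendsto (fun l : ℝ => l ^ (-a) * ψ l) atTop (𝓝 0) := fun ht =>
    h.not_ge (csInf_le ⟨0, fun _ hx => hx.1⟩ ⟨ha, ht⟩)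
  rw [Metric.tendsto_nhds] at hnot
  push Not at hnot
  obtain ⟨c, hc, hfreq⟩ := hnot
  refine ⟨c, hc, (hfreq.and_eventually (hψ.and (eventually_gt_atTop 0))).mono ?_⟩
  rintro l ⟨hcl, hψl, hl0⟩
  rwa [Real.dist_eq, sub_zero, abs_of_nonneg (mul_nonneg (Real.rpow_nonneg hl0.le _) hψl),
    Real.rpow_neg hl0.le, ← div_eq_inv_mul, le_div_iff₀ (by positivity)] at hcl

end Indices

section TailIntegral

variable {f : ℝ → ℝ} {x C p : ℝ}

lemma one_div_le_inv_mul_rpow_neg {y u : ℝ} (hC : 0 < C) (hu : 0 < u) (h : C * u ^ p ≤ y) :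
    1 / y ≤ C⁻¹ * u ^ (-p) := by
  rw [Real.rpow_neg hu.le, ← mul_inv, one_div]
  exact inv_anti₀ (by positivity) h

lemma integrableOn_Ioi_one_div_of_mul_rpow_le (hx : 0 < x) (hC : 0 < C) (hp : 1 < p)
    (hmeas : AEStronglyMeasurable (fun u => 1 / f u) (volume.restrict (Ioi x)))
    (hf : ∀ u ∈ Ioi x, C * u ^ p ≤ f u) : IntegrableOn (fun u => 1 / f u) (Ioi x) := by
  refine ((integrableOn_Ioi_rpow_of_lt (neg_lt_neg hp) hx).const_mul C⁻¹).mono hmeas ?_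
  filter_upwards [ae_restrict_mem measurableSet_Ioi] with u (hu : x < u)
  have hu0 := hx.trans hu
  have hfu : 0 < f u := (by positivity : 0 < C * u ^ p).trans_le (hf u hu)
  rw [Real.norm_of_nonneg (one_div_pos.mpr hfu).le, Real.norm_of_nonneg (by positivity)]
  exact one_div_le_inv_mul_rpow_neg hC hu0 (hf u hu)

lemma setIntegral_Ioi_one_div_le_of_mul_rpow_le (hx : 0 < x) (hC : 0 < C) (hp : 1 < p)
    (hmeas : AEStronglyMeasurable (fun u => 1 / f u) (volume.restrict (Ioi x)))
    (hf : ∀ u ∈ Ioi x, C * u ^ p ≤ f u) :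
    ∫ u in Ioi x, 1 / f u ≤ x ^ (1 - p) / (C * (p - 1)) := by
  have hrpow := integrableOn_Ioi_rpow_of_lt (neg_lt_neg hp) hx
  calc ∫ u in Ioi x, 1 / f u ≤ ∫ u in Ioi x, C⁻¹ * u ^ (-p) :=
        setIntegral_mono_on (integrableOn_Ioi_one_div_of_mul_rpow_le hx hC hp hmeas hf)
          (hrpow.const_mul _) measurableSet_Ioi
          fun u hu => one_div_le_inv_mul_rpow_neg hC (hx.trans hu) (hf u hu)
    _ = x ^ (1 - p) / (C * (p - 1)) := by
        rw [integral_const_mul, integral_Ioi_rpow_of_lt (neg_lt_neg hp) hx,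
          show -p + 1 = 1 - p by ring, neg_div, ← div_neg, neg_sub]
        field_simp

lemma le_of_setIntegral_Ioi_le {y : ℝ} (hint : IntegrableOn f (Ioi x))
    (hpos : ∀ u ∈ Ioi x, 0 < f u) (h : ∫ u in Ioi x, f u ≤ ∫ u in Ioi y, f u) : y ≤ x := by
  by_contra! hxy
  have hIoc : 0 < ∫ u in Ioc x y, f u := by
    rw [setIntegral_pos_iff_support_of_nonneg_ae
        (ae_restrict_of_forall_mem measurableSet_Ioc fun u hu => (hpos u hu.1).le)
        (hint.mono_set Ioc_subset_Ioi_self),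
      inter_eq_right.mpr fun u (hu : u ∈ Ioc x y) => Function.mem_support.mpr (hpos u hu.1).ne',
      Real.volume_Ioc]
    exact ENNReal.ofReal_pos.mpr (sub_pos.mpr hxy)
  rw [← Ioc_union_Ioi_eq_Ioi hxy.le, setIntegral_union (Ioc_disjoint_Ioi le_rfl)
    measurableSet_Ioi (hint.mono_set Ioc_subset_Ioi_self)
    (hint.mono_set (Ioi_subset_Ioi hxy.le))] at h
  linarith

end TailIntegral

lemma log_div_log_one_div_rpow_neg_le {w l c : ℝ} (hw : 0 < w) (hwl : w ≤ l) (hl : 1 < l)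
    (hc : 0 < c) : Real.log w / Real.log (1 / l ^ (-(1 / c))) ≤ c := by
  have hlog := Real.log_pos hl
  rw [one_div (l ^ _), ← Real.rpow_neg (by linarith), neg_neg, Real.log_rpow (by linarith),
    div_le_iff₀ (by positivity)]
  calc Real.log w ≤ Real.log l := Real.log_le_log hw hwl
    _ = c * (1 / c * Real.log l) := by field_simp

namespace BranchingMechanism

variable (b : BranchingMechanism)

lemma psi_eq (l : ℝ) :
    b.psi l = b.α * l + b.β * l ^ 2 + ∫ r in Ioi 0, compensatedExp (l * r) ∂b.pi := by
  simp only [psi, compensatedExp, neg_mul]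

lemma integrableOn_min_sq : IntegrableOn (fun r : ℝ => min r (r ^ 2)) (Ioi 0) b.pi := by
  refine ⟨(continuous_id.min (continuous_pow 2)).aestronglyMeasurable, ?_⟩
  rw [hasFiniteIntegral_iff_ofReal]
  · exact b.finite_int
  · filter_upwards [ae_restrict_mem measurableSet_Ioi] with r (hr : 0 < r)
    positivity

lemma integrableOn_compensatedExp_mul {l : ℝ} (hl : 0 ≤ l) :
    IntegrableOn (fun r : ℝ => compensatedExp (l * r)) (Ioi 0) b.pi := by
  refine (b.integrableOn_min_sq.const_mul (max l (l ^ 2))).mono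
    (by unfold compensatedExp; fun_prop) ?_
  filter_upwards [ae_restrict_mem measurableSet_Ioi] with r (hr : 0 < r)
  rw [Real.norm_of_nonneg (compensatedExp_nonneg _),
    Real.norm_of_nonneg (mul_nonneg (le_max_of_le_left hl) (by positivity))]
  exact compensatedExp_mul_le hl hr.le

lemma psi_zero : b.psi 0 = 0 := by simp [psi_eq, compensatedExp_zero]

lemma psi_nonneg {l : ℝ} (hl : 0 ≤ l) : 0 ≤ b.psi l := by
  rw [psi_eq]
  have := setIntegral_nonneg (μ := b.pi) measurableSet_Ioi
    fun r (_ : r ∈ Ioi 0) => compensatedExp_nonneg (l * r)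
  have := mul_nonneg b.alpha_nonneg hl
  have := mul_nonneg b.beta_nonneg (sq_nonneg l)
  linarith

lemma mul_psi_le_mul_psi {x y : ℝ} (hx : 0 < x) (hxy : x ≤ y) : y * b.psi x ≤ x * b.psi y := by
  have hy := hx.trans_le hxy
  have hint : y * ∫ r in Ioi 0, compensatedExp (x * r) ∂b.pi
      ≤ x * ∫ r in Ioi 0, compensatedExp (y * r) ∂b.pi := by
    rw [← integral_const_mul, ← integral_const_mul]
    refine setIntegral_mono_on ((b.integrableOn_compensatedExp_mul hx.le).const_mul y)
      ((b.integrableOn_compensatedExp_mul hy.le).const_mul x) measurableSet_Ioi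
      fun r (hr : 0 < r) => ?_
    have h := mul_compensatedExp_le_mul (mul_pos hx hr) (mul_le_mul_of_nonneg_right hxy hr.le)
    nlinarith
  have hquad : y * (b.β * x ^ 2) ≤ x * (b.β * y ^ 2) := by
    have := mul_le_mul_of_nonneg_left hxy (mul_nonneg b.beta_nonneg (mul_pos hx hy).le)
    nlinarith
  rw [psi_eq, psi_eq]
  nlinarith

lemma psi_monotoneOn : MonotoneOn b.psi (Ici 0) := by
  intro x (hx : 0 ≤ x) y (hy : 0 ≤ y) hxy
  rcases hx.eq_or_lt with rfl | hx
  · simpa only [b.psi_zero] using b.psi_nonneg hy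
  · nlinarith [b.mul_psi_le_mul_psi hx hxy, b.psi_nonneg hx.le]

lemma psi_le_mul_sq : ∃ C, ∀ l, 1 ≤ l → b.psi l ≤ C * l ^ 2 := by
  set I := ∫ r in Ioi 0, min r (r ^ 2) ∂b.pi
  refine ⟨b.α + b.β + I, fun l hl => ?_⟩
  have hll : l ≤ l ^ 2 := by nlinarith
  have hint : ∫ r in Ioi 0, compensatedExp (l * r) ∂b.pi ≤ l ^ 2 * I := by
    rw [← integral_const_mul]
    refine setIntegral_mono_on (b.integrableOn_compensatedExp_mul (by linarith))
      (b.integrableOn_min_sq.const_mul _) measurableSet_Ioi fun r (hr : 0 < r) => ?_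
    rw [← max_eq_right hll]
    exact compensatedExp_mul_le (by linarith) hr.le
  have := mul_le_mul_of_nonneg_left hll b.alpha_nonneg
  rw [psi_eq]
  nlinarith

lemma tendsto_rpow_neg_three_mul_psi :
    Tendsto (fun l : ℝ => l ^ (-3 : ℝ) * b.psi l) atTop (𝓝 0) := by
  obtain ⟨C, hC⟩ := b.psi_le_mul_sq
  refine squeeze_zero' ?_ ?_ (mul_zero C ▸ (tendsto_rpow_neg_atTop one_pos).const_mul C)
  · filter_upwards [eventually_ge_atTop 0] with l hl
    exact mul_nonneg (Real.rpow_nonneg hl _) (b.psi_nonneg hl)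
  · filter_upwards [eventually_ge_atTop 1] with l hl
    have hl0 : 0 < l := by linarith
    calc l ^ (-3 : ℝ) * b.psi l ≤ l ^ (-3 : ℝ) * (C * l ^ (2 : ℝ)) := by
          rw [Real.rpow_two]
          exact mul_le_mul_of_nonneg_left (hC l hl) (Real.rpow_nonneg hl0.le _)
      _ = C * l ^ (-1 : ℝ) := by
          rw [mul_left_comm, ← Real.rpow_add hl0]
          norm_num

lemma aestronglyMeasurable_one_div_psi {x : ℝ} (hx : 0 ≤ x) :
    AEStronglyMeasurable (fun u => 1 / b.psi u) (volume.restrict (Ioi x)) := by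
  simp only [one_div]
  have hmono := b.psi_monotoneOn.mono (Ioi_subset_Ici_self.trans (Ici_subset_Ici.mpr hx))
  exact (aemeasurable_restrict_of_monotoneOn measurableSet_Ioi hmono).inv.aestronglyMeasurable

/-- A weighted geometric mean of the lower bounds `A * u ≤ ψ u` (from `ψ(λ)/λ` being
nondecreasing) and `u ^ a₀ ≤ ψ u`. -/
lemma rpow_mul_rpow_le_psi {a₀ A θ l u : ℝ} (hl : 0 < l) (hlu : l ≤ u) (hθ0 : 0 ≤ θ)
    (hθ1 : θ ≤ 1) (hA : 0 ≤ A) (hAl : A * l ≤ b.psi l) (hu : u ^ a₀ ≤ b.psi u) :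
    A ^ (1 - θ) * u ^ (1 + θ * (a₀ - 1)) ≤ b.psi u := by
  have hu0 := hl.trans_le hlu
  have hAu : A * u ≤ b.psi u := by
    nlinarith [b.mul_psi_le_mul_psi hl hlu, mul_le_mul_of_nonneg_left hAl hu0.le]
  calc A ^ (1 - θ) * u ^ (1 + θ * (a₀ - 1)) = (A * u) ^ (1 - θ) * (u ^ a₀) ^ θ := by
        rw [Real.mul_rpow hA hu0.le, ← Real.rpow_mul hu0.le, mul_assoc, ← Real.rpow_add hu0]
        ring_nf
    _ ≤ b.psi u := rpow_mul_rpow_le_of_le (by positivity) (by positivity) hθ0 hθ1 hAu hu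

lemma frequently_setIntegral_Ioi_one_div_psi_le {a₀ a c₀ s : ℝ} (ha₀ : 1 < a₀)
    (hlow : ∀ᶠ u in atTop, u ^ a₀ ≤ b.psi u) (hc₀ : 0 < c₀)
    (hfreq : ∃ᶠ l in atTop, c₀ * l ^ a ≤ b.psi l) (hs : s < a - 1) :
    ∃ᶠ l in atTop, IntegrableOn (fun u => 1 / b.psi u) (Ioi l) ∧
      ∫ u in Ioi l, 1 / b.psi u ≤ l ^ (-s) := by
  obtain ⟨θ, hθ0, hθ1, hθs⟩ := exists_lt_mul_one_sub_add_mul (w := a₀ - 1) hs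
  have hsmall : ∀ᶠ l in atTop,
      l ^ (-((a - 1) * (1 - θ) + θ * (a₀ - 1) - s)) ≤ c₀ ^ (1 - θ) * (θ * (a₀ - 1)) :=
    (tendsto_rpow_neg_atTop (sub_pos.mpr hθs)).eventually
      (ge_mem_nhds (by have := sub_pos.mpr ha₀; positivity))
  refine (hfreq.and_eventually ((eventually_forall_ge_atTop.mpr hlow).and
    (hsmall.and (eventually_gt_atTop 0)))).mono ?_
  rintro l ⟨hl, hlowl, hsl, hl0⟩
  have hC : 0 < (c₀ * l ^ (a - 1)) ^ (1 - θ) := by positivity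
  have hp : 1 < 1 + θ * (a₀ - 1) := by have := sub_pos.mpr ha₀; nlinarith
  have hbound : ∀ u ∈ Ioi l,
      (c₀ * l ^ (a - 1)) ^ (1 - θ) * u ^ (1 + θ * (a₀ - 1)) ≤ b.psi u := fun u hu =>
    b.rpow_mul_rpow_le_psi hl0 hu.le hθ0.le hθ1.le (by positivity)
      (by rwa [mul_assoc, ← Real.rpow_add_one hl0.ne', sub_add_cancel]) (hlowl u hu.le)
  have hmeas := b.aestronglyMeasurable_one_div_psi hl0.le
  refine ⟨integrableOn_Ioi_one_div_of_mul_rpow_le hl0 hC hp hmeas hbound,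
    (setIntegral_Ioi_one_div_le_of_mul_rpow_le hl0 hC hp hmeas hbound).trans ?_⟩
  -- the bound is `l ^ (-e) / κ` with `e = (a - 1) * (1 - θ) + θ * (a₀ - 1) > s`
  -- and `κ = c₀ ^ (1 - θ) * (θ * (a₀ - 1))`
  rw [div_le_iff₀ (by have := sub_pos.mpr hp; positivity)]
  calc l ^ (1 - (1 + θ * (a₀ - 1)))
      = l ^ (-((a - 1) * (1 - θ) + θ * (a₀ - 1) - s)) *
          (l ^ (-s) * l ^ ((a - 1) * (1 - θ))) := by
        rw [← Real.rpow_add hl0, ← Real.rpow_add hl0]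
        ring_nf
    _ ≤ c₀ ^ (1 - θ) * (θ * (a₀ - 1)) * (l ^ (-s) * l ^ ((a - 1) * (1 - θ))) :=
        mul_le_mul_of_nonneg_right hsl (by positivity)
    _ = l ^ (-s) * ((c₀ * l ^ (a - 1)) ^ (1 - θ) * (1 + θ * (a₀ - 1) - 1)) := by
        rw [Real.mul_rpow hc₀.le (by positivity), ← Real.rpow_mul hl0.le]
        ring

end BranchingMechanism

theorem stmt13_general (b : BranchingMechanism)
    (v : ℝ → ℝ)
    (hv : ∀ a : ℝ, 0 < a → 0 < v a ∧ (∫ u in Set.Ioi (v a), 1 / b.psi u) = a)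
    (hγ : 1 < lowerIndex b.psi) :
    ∀ ε > (0 : ℝ), ∃ᶠ δ in nhdsWithin (0 : ℝ) (Set.Ioi 0),
      Real.log (v δ) / Real.log (1 / δ) ≤ 1 / (upperIndex b.psi - 1) + ε := by
  intro ε hε
  obtain ⟨a₀, ha₀, hlow⟩ := exists_eventually_rpow_le_of_lt_lowerIndex zero_le_one hγ
  have hη : 1 < upperIndex b.psi := ha₀.trans_le <|
    le_upperIndex_of_eventually_rpow_le ⟨3, by norm_num, b.tendsto_rpow_neg_three_mul_psi⟩ hlow
  set c := 1 / (upperIndex b.psi - 1) + ε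
  have hc : 0 < c := by have := sub_pos.mpr hη; positivity
  have hcη : 1 / c + 1 < upperIndex b.psi := by
    have := (one_div_lt hc (sub_pos.mpr hη)).mpr (lt_add_of_pos_right _ hε)
    linarith
  obtain ⟨a, hca, haη⟩ := exists_between hcη
  obtain ⟨c₀, hc₀, hfreq⟩ := frequently_le_of_lt_upperIndex
    (by linarith [one_div_pos.mpr hc]) haη ((eventually_ge_atTop 0).mono fun l => b.psi_nonneg)
  have hδ : Tendsto (fun l : ℝ => l ^ (-(1 / c))) atTop (𝓝[>] 0) :=
    tendsto_nhdsWithin_iff.mpr ⟨tendsto_rpow_neg_atTop (by positivity),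
      (eventually_gt_atTop 0).mono fun l hl => Real.rpow_pos_of_pos hl _⟩
  refine hδ.frequently (((b.frequently_setIntegral_Ioi_one_div_psi_le ha₀ hlow hc₀ hfreq
    (s := 1 / c) (by linarith)).and_eventually ((eventually_forall_ge_atTop.mpr hlow).and
      (eventually_gt_atTop 1))).mono ?_)
  rintro l ⟨⟨hint, hle⟩, hlowl, hl⟩
  have hpos : ∀ u ∈ Ioi l, 0 < 1 / b.psi u := fun u (hu : l < u) => one_div_pos.mpr
    ((Real.rpow_pos_of_pos (by linarith) a₀).trans_le (hlowl u hu.le))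
  obtain ⟨hv0, hvint⟩ := hv _ (Real.rpow_pos_of_pos (by linarith) (-(1 / c)))
  exact log_div_log_one_div_rpow_neg_le hv0
    (le_of_setIntegral_Ioi_le hint hpos (hle.trans hvint.ge)) hl hc

/-- **Statement 13** (Lemma 5.4 (ii)): if `∫_1^∞ du/ψ(u) < ∞` and the lower index `γ`
satisfies `γ > 1`, then `liminf_{δ→0+} log v(δ) / log(1/δ) ≤ 1/(η-1)`, where `η` is
the upper index of `ψ` at infinity. -/
theorem stmt13 (b : BranchingMechanism)
    (hint : (∫⁻ u in Set.Ioi (1 : ℝ), (ENNReal.ofReal (b.psi u))⁻¹) < ⊤)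
    (v : ℝ → ℝ)
    (hv : ∀ a : ℝ, 0 < a → 0 < v a ∧ (∫ u in Set.Ioi (v a), 1 / b.psi u) = a)
    (hγ : 1 < lowerIndex b.psi) :
    ∀ ε > (0 : ℝ), ∃ᶠ δ in nhdsWithin (0 : ℝ) (Set.Ioi 0),
      Real.log (v δ) / Real.log (1 / δ) ≤ 1 / (upperIndex b.psi - 1) + ε :=
  stmt13_general b v hv hγ
end
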